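/- The order of any periodic subgroup of the multiplicative semigroup of n×n matrices over the tropical semiring is at most n!; that is, if 𝒢 is a subgroup of (𝕋^{n×n}, ⊗) in which every element has finite order, then 𝒢 is finite with |𝒢| ≤ n!. -/

import Mathlib

/-- The tropical (max-plus) semiring carrier: `ℝ ∪ {-∞}`, with `⊥` playing the
role of `-∞`. -/
abbrev Trop : Type := WithBot ℝ

/-- Tropical matrix multiplication: `(A ⊗ B) i j = max_k (A i k + B k j)`. -/
def tropMulMat {n m p : ℕ} (A : Matrix (Fin n) (Fin m) Trop)
    (B : Matrix (Fin m) (Fin p) Trop) : Matrix (Fin n) (Fin p) Trop :=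
  fun i j => Finset.univ.sup fun k => A i k + B k j

/-- `tropIter A k` is the `(k+1)`-st tropical power `A^(k+1)` of `A`. -/
def tropIter {n : ℕ} (A : Matrix (Fin n) (Fin n) Trop) :
    ℕ → Matrix (Fin n) (Fin n) Trop
  | 0 => A
  | k + 1 => tropMulMat A (tropIter A k)


/-!
The neutral element `E` is idempotent, so its diagonal is `≤ 0`; call `i` critical when
`E i i = 0`, and identify critical `i, k` when `E i k + E k i = 0`. For `A` in the group with
inverse `B`, every critical `i` has a critical `k` with `A i k + B k i = 0`, and `[i] ↦ [k]` is a
well-defined permutation of the at most `n` classes. If `A` and `A'` induce the same permutation,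
then `P = A ⊗ A'⁻¹` and `P⁻¹` satisfy `P i i + P⁻¹ i i = 0` at every critical `i`; periodicity
makes the diagonals `≤ 0`, so both vanish there. A periodic matrix with nonnegative diagonal entry
`P i i` has its row `i` bounded by that of its power `E`, and every finite entry of `E` factors
through a critical index, so `P ≤ E` and `P⁻¹ ≤ E`. Hence `E = P ⊗ P⁻¹ ≤ P ⊗ E = P`, i.e. `A = A'`,
and the group embeds into a symmetric group on at most `n` letters.
-/

section

variable {n : ℕ} {E A B A' B' C D P Q X : Matrix (Fin n) (Fin n) Trop}

lemma le_tropMulMat {m p : ℕ} (A : Matrix (Fin n) (Fin m) Trop) (B : Matrix (Fin m) (Fin p) Trop)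
    (i : Fin n) (k : Fin m) (j : Fin p) : A i k + B k j ≤ tropMulMat A B i j :=
  Finset.le_sup (f := fun k => A i k + B k j) (Finset.mem_univ k)

lemma tropMulMat_le {m p : ℕ} {A : Matrix (Fin n) (Fin m) Trop} {B : Matrix (Fin m) (Fin p) Trop}
    {i : Fin n} {j : Fin p} {t : Trop} (h : ∀ k, A i k + B k j ≤ t) : tropMulMat A B i j ≤ t :=
  Finset.sup_le fun k _ => h k

lemma add_le_of_tropMulMat_eq {m p : ℕ} {A : Matrix (Fin n) (Fin m) Trop}
    {B : Matrix (Fin m) (Fin p) Trop} {C : Matrix (Fin n) (Fin p) Trop} (h : tropMulMat A B = C)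
    (i : Fin n) (k : Fin m) (j : Fin p) : A i k + B k j ≤ C i j :=
  (le_tropMulMat A B i k j).trans_eq (congrFun₂ h i j)

lemma tropMulMat_mono_right {m p : ℕ} {A : Matrix (Fin n) (Fin m) Trop}
    {B B' : Matrix (Fin m) (Fin p) Trop} (h : ∀ k j, B k j ≤ B' k j) (i : Fin n) (j : Fin p) :
    tropMulMat A B i j ≤ tropMulMat A B' i j :=
  tropMulMat_le fun k => (add_le_add_right (h k j) _).trans (le_tropMulMat _ _ _ _ _)

lemma exists_tropMulMat_eq (A B : Matrix (Fin n) (Fin n) Trop) (i j : Fin n) :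
    ∃ k, tropMulMat A B i j = A i k + B k j := by
  obtain ⟨k, -, hk⟩ := Finset.exists_mem_eq_sup Finset.univ ⟨i, Finset.mem_univ i⟩
    fun k => A i k + B k j
  exact ⟨k, hk⟩

lemma tropMulMat_assoc (A B C : Matrix (Fin n) (Fin n) Trop) :
    tropMulMat (tropMulMat A B) C = tropMulMat A (tropMulMat B C) := by
  funext i j
  apply le_antisymm <;> refine tropMulMat_le fun k => ?_
  · obtain ⟨l, hl⟩ := exists_tropMulMat_eq A B i k
    calc tropMulMat A B i k + C k j = A i l + (B l k + C k j) := by rw [hl, add_assoc]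
      _ ≤ A i l + tropMulMat B C l j := add_le_add_right (le_tropMulMat _ _ _ _ _) _
      _ ≤ _ := le_tropMulMat _ _ _ _ _
  · obtain ⟨l, hl⟩ := exists_tropMulMat_eq B C k j
    calc A i k + tropMulMat B C k j = A i k + B k l + C l j := by rw [hl, add_assoc]
      _ ≤ tropMulMat A B i l + C l j := add_le_add_left (le_tropMulMat _ _ _ _ _) _
      _ ≤ _ := le_tropMulMat _ _ _ _ _

lemma diag_nonpos_of_tropMulMat_self (hE : tropMulMat E E = E) (i : Fin n) : E i i ≤ 0 := by
  have h := add_le_of_tropMulMat_eq hE i i i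
  induction hx : E i i using WithBot.recBotCoe with
  | bot => exact bot_le
  | coe r =>
    rw [hx] at h
    have : r + r ≤ r := by exact_mod_cast h
    exact_mod_cast (by linarith : r ≤ 0)

lemma le_tropIter_of_diag_nonneg {i : Fin n} (h : 0 ≤ A i i) (j : Fin n) (k : ℕ) :
    A i j ≤ tropIter A k i j := by
  induction k with
  | zero => rfl
  | succ k ih =>
    calc A i j = 0 + A i j := (zero_add _).symm
      _ ≤ A i i + tropIter A k i j := add_le_add h ih
      _ ≤ tropIter A (k + 1) i j := le_tropMulMat _ _ _ _ _

lemma diag_nonpos_of_tropIter_eq (hE : tropMulMat E E = E) {k : ℕ} (hA : tropIter A k = E)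
    (i : Fin n) : A i i ≤ 0 := by
  by_contra! hpos
  have := (le_tropIter_of_diag_nonneg hpos.le i k).trans_eq (congrFun₂ hA i i)
  exact (hpos.trans_le this).not_ge (diag_nonpos_of_tropMulMat_self hE i)

/- Iterating a choice `f k` of a maximizing index in `E k j = max_l (E k l + E l j)` from `i`
eventually returns to some `c`; the loop at `c` has weight `0`, so `c` is critical. -/
lemma exists_diag_eq_zero_le_add (hE : tropMulMat E E = E) {i j : Fin n} (hij : E i j ≠ ⊥) :
    ∃ c, E c c = 0 ∧ E i j ≤ E i c + E c j := by
  choose f hf using fun k => exists_tropMulMat_eq E E k j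
  rw [hE] at hf
  have hiter : ∀ m k, E k j ≤ E k (f^[m + 1] k) + E (f^[m + 1] k) j := by
    intro m k
    induction m with
    | zero => exact (hf k).le
    | succ m ih =>
      rw [Function.iterate_succ_apply' f (m + 1)]
      calc E k j ≤ E k (f^[m + 1] k) + E (f^[m + 1] k) j := ih
        _ = E k (f^[m + 1] k) + E (f^[m + 1] k) (f (f^[m + 1] k)) + E (f (f^[m + 1] k)) j := by
          rw [hf, add_assoc]
        _ ≤ _ := add_le_add_left (add_le_of_tropMulMat_eq hE _ _ _) _
  obtain ⟨a, b, hab, hfab⟩ := Finite.exists_ne_map_eq_of_infinite fun m => f^[m + 1] i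
  wlog hlt : a < b generalizing a b
  · exact this b a hab.symm hfab.symm (hab.lt_or_gt.resolve_left hlt)
  set c := f^[a + 1] i
  have hcycle : f^[b - a - 1 + 1] c = c := by
    rw [← Function.iterate_add_apply, show b - a - 1 + 1 + (a + 1) = b + 1 by omega]
    exact hfab.symm
  have hic := hiter a i
  have hcj : E c j ≠ ⊥ := fun h => hij (le_bot_iff.mp (by rwa [h, WithBot.add_bot] at hic))
  have hcc := hiter (b - a - 1) c
  rw [hcycle, add_comm] at hcc
  refine ⟨c, le_antisymm (diag_nonpos_of_tropMulMat_self hE c) ?_, hic⟩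
  exact (WithBot.add_le_add_iff_left hcj).mp (by simpa using hcc)

lemma le_of_tropIter_eq_of_diag_nonneg (hE : tropMulMat E E = E) (hEX : tropMulMat E X = X)
    {k : ℕ} (hX : tropIter X k = E) (hdiag : ∀ c, E c c = 0 → 0 ≤ X c c) (i j : Fin n) :
    X i j ≤ E i j := by
  have hrow : ∀ c, E c c = 0 → X c j ≤ E c j := fun c hc =>
    (le_tropIter_of_diag_nonneg (hdiag c hc) j k).trans_eq (congrFun₂ hX c j)
  rw [← hEX]
  refine tropMulMat_le fun l => ?_
  by_cases hil : E i l = ⊥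
  · simp [hil]
  obtain ⟨c, hc, hcl⟩ := exists_diag_eq_zero_le_add hE hil
  calc E i l + X l j ≤ E i c + (E c l + X l j) := by
        rw [← add_assoc]; exact add_le_add_left hcl _
    _ ≤ E i c + X c j := add_le_add_right (add_le_of_tropMulMat_eq hEX c l j) _
    _ ≤ E i c + E c j := add_le_add_right (hrow c hc) _
    _ ≤ E i j := add_le_of_tropMulMat_eq hE i c j

/-- `A` and `B` are mutually inverse in the monoid `E ⊗ 𝕋^{n×n} ⊗ E`, whose identity is `E`. -/
structure IsLocalInverse (E A B : Matrix (Fin n) (Fin n) Trop) : Prop where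
  mul_inv : tropMulMat A B = E
  inv_mul : tropMulMat B A = E
  one_mul : tropMulMat E A = A
  mul_one : tropMulMat A E = A
  one_mul_inv : tropMulMat E B = B
  inv_mul_one : tropMulMat B E = B

namespace IsLocalInverse

lemma symm (h : IsLocalInverse E A B) : IsLocalInverse E B A :=
  ⟨h.inv_mul, h.mul_inv, h.one_mul_inv, h.inv_mul_one, h.one_mul, h.mul_one⟩

lemma idem (h : IsLocalInverse E A B) : tropMulMat E E = E := by
  nth_rewrite 2 [← h.mul_inv]
  rw [← tropMulMat_assoc, h.one_mul, h.mul_inv]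

lemma mul (h : IsLocalInverse E A B) (h' : IsLocalInverse E A' B') :
    IsLocalInverse E (tropMulMat A A') (tropMulMat B' B) where
  mul_inv := by
    rw [tropMulMat_assoc, ← tropMulMat_assoc A', h'.mul_inv, ← tropMulMat_assoc, h.mul_one,
      h.mul_inv]
  inv_mul := by
    rw [tropMulMat_assoc, ← tropMulMat_assoc B, h.inv_mul, ← tropMulMat_assoc, h'.inv_mul_one,
      h'.inv_mul]
  one_mul := by rw [← tropMulMat_assoc, h.one_mul]
  mul_one := by rw [tropMulMat_assoc, h'.mul_one]
  one_mul_inv := by rw [← tropMulMat_assoc, h'.one_mul_inv]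
  inv_mul_one := by rw [tropMulMat_assoc, h.inv_mul_one]

end IsLocalInverse

def ZeroCycle (A B : Matrix (Fin n) (Fin n) Trop) (i k : Fin n) : Prop := A i k + B k i = 0

lemma ZeroCycle.swap {i k : Fin n} (h : ZeroCycle A B i k) : ZeroCycle B A k i := by
  rwa [ZeroCycle, add_comm]

lemma ZeroCycle.trans {i k l : Fin n} (hC : tropMulMat A A' = C) (hD : tropMulMat B' B = D)
    (hCD : tropMulMat C D = E) (hi : E i i = 0) (h : ZeroCycle A B i k)
    (h' : ZeroCycle A' B' k l) : ZeroCycle C D i l := by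
  refine le_antisymm ((add_le_of_tropMulMat_eq hCD i l i).trans_eq hi) ?_
  calc (0 : Trop) = (A i k + B k i) + (A' k l + B' l k) := by rw [h, h', add_zero]
    _ = (A i k + A' k l) + (B' l k + B k i) := by abel
    _ ≤ C i l + D l i :=
      add_le_add (add_le_of_tropMulMat_eq hC i k l) (add_le_of_tropMulMat_eq hD l k i)

abbrev Crit (E : Matrix (Fin n) (Fin n) Trop) : Type := {i : Fin n // E i i = 0}

/-- Its classes are the strongly connected components of the critical graph of `E`. -/
def critSetoid (hE : tropMulMat E E = E) : Setoid (Crit E) where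
  r i k := ZeroCycle E E i k
  iseqv :=
    { refl := fun i => by rw [ZeroCycle, i.2, add_zero]
      symm := ZeroCycle.swap
      trans := fun {i} _ _ h h' => ZeroCycle.trans hE hE hE i.2 h h' }

abbrev CritClass (hE : tropMulMat E E = E) : Type := Quotient (critSetoid hE)

lemma card_critClass_le (hE : tropMulMat E E = E) : Nat.card (CritClass hE) ≤ n :=
  calc Nat.card (CritClass hE) ≤ Nat.card (Crit E) :=
        Nat.card_le_card_of_surjective _ Quotient.mk_surjective
    _ ≤ Nat.card (Fin n) := Nat.card_le_card_of_injective _ Subtype.val_injective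
    _ = n := Nat.card_fin n

namespace IsLocalInverse

lemma exists_zeroCycle (h : IsLocalInverse E A B) {i : Fin n} (hi : E i i = 0) :
    ∃ k, E k k = 0 ∧ ZeroCycle A B i k := by
  obtain ⟨k, hk⟩ := exists_tropMulMat_eq A B i i
  have hcyc : ZeroCycle A B i k := by rw [ZeroCycle, ← hk, h.mul_inv, hi]
  refine ⟨k, le_antisymm (diag_nonpos_of_tropMulMat_self h.idem k) ?_, hcyc⟩
  exact hcyc.swap.symm.le.trans (add_le_of_tropMulMat_eq h.inv_mul k i k)

noncomputable def witness (h : IsLocalInverse E A B) (i : Crit E) : Crit E :=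
  ⟨_, (h.exists_zeroCycle i.2).choose_spec.1⟩

lemma zeroCycle_witness (h : IsLocalInverse E A B) (i : Crit E) :
    ZeroCycle A B i (h.witness i) :=
  (h.exists_zeroCycle i.2).choose_spec.2

lemma zeroCycle_of_zeroCycle (h : IsLocalInverse E A B) {i i' k k' : Crit E}
    (hii' : ZeroCycle E E i i') (hk : ZeroCycle A B i k) (hk' : ZeroCycle A B i' k') :
    ZeroCycle E E k k' :=
  have hi'k : ZeroCycle A B i' k := hii'.swap.trans h.one_mul h.inv_mul_one h.mul_inv i'.2 hk
  hi'k.swap.trans h.inv_mul h.inv_mul h.idem k.2 hk'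

noncomputable def classPerm (h : IsLocalInverse E A B) : Equiv.Perm (CritClass h.idem) where
  toFun := Quotient.map h.witness fun _ _ hii' =>
    h.zeroCycle_of_zeroCycle hii' (h.zeroCycle_witness _) (h.zeroCycle_witness _)
  invFun := Quotient.map h.symm.witness fun _ _ hii' =>
    h.symm.zeroCycle_of_zeroCycle hii' (h.symm.zeroCycle_witness _) (h.symm.zeroCycle_witness _)
  left_inv := Quotient.ind fun i => Quotient.sound <| ZeroCycle.swap <|
    (h.zeroCycle_witness i).trans h.mul_inv h.mul_inv h.idem i.2 (h.symm.zeroCycle_witness _)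
  right_inv := Quotient.ind fun i => Quotient.sound <| ZeroCycle.swap <|
    (h.symm.zeroCycle_witness i).trans h.inv_mul h.inv_mul h.idem i.2 (h.zeroCycle_witness _)

lemma eq_of_zeroCycle_self (h : IsLocalInverse E P Q) {k k' : ℕ} (hP : tropIter P k = E)
    (hQ : tropIter Q k' = E) (hcyc : ∀ i, E i i = 0 → ZeroCycle P Q i i) : P = E := by
  have hPQ {i} (hi : E i i = 0) : P i i + Q i i = 0 := hcyc i hi
  have hPE := le_of_tropIter_eq_of_diag_nonneg h.idem h.one_mul hP fun i hi =>
    (hPQ hi).symm.le.trans (add_le_of_nonpos_right (diag_nonpos_of_tropIter_eq h.idem hQ i))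
  have hQE := le_of_tropIter_eq_of_diag_nonneg h.idem h.one_mul_inv hQ fun i hi =>
    (hPQ hi).symm.le.trans (add_le_of_nonpos_left (diag_nonpos_of_tropIter_eq h.idem hP i))
  funext i j
  refine le_antisymm (hPE i j) ?_
  calc E i j = tropMulMat P Q i j := by rw [h.mul_inv]
    _ ≤ tropMulMat P E i j := tropMulMat_mono_right hQE i j
    _ = P i j := by rw [h.mul_one]

lemma zeroCycle_self_of_classPerm_eq (h : IsLocalInverse E A B) (h' : IsLocalInverse E A' B')
    (heq : h.classPerm = h'.classPerm) (i : Crit E) :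
    ZeroCycle (tropMulMat A B') (tropMulMat A' B) i i := by
  have hww' : ZeroCycle E E (h.witness i) (h'.witness i) :=
    Quotient.exact (DFunLike.congr_fun heq ⟦i⟧)
  have hwi : ZeroCycle B' A' (h.witness i) i :=
    hww'.trans h'.one_mul_inv h'.mul_one h'.inv_mul (h.witness i).2 (h'.zeroCycle_witness i).swap
  exact (h.zeroCycle_witness i).trans rfl rfl (h.mul h'.symm).mul_inv i.2 hwi

lemma eq_of_classPerm_eq (h : IsLocalInverse E A B) (h' : IsLocalInverse E A' B') {k k' : ℕ}
    (hP : tropIter (tropMulMat A B') k = E) (hQ : tropIter (tropMulMat A' B) k' = E)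
    (heq : h.classPerm = h'.classPerm) : A = A' := by
  have hAB' : tropMulMat A B' = E := (h.mul h'.symm).eq_of_zeroCycle_self hP hQ fun i hi =>
    zeroCycle_self_of_classPerm_eq h h' heq ⟨i, hi⟩
  calc A = tropMulMat A E := h.mul_one.symm
    _ = tropMulMat (tropMulMat A B') A' := by rw [tropMulMat_assoc, h'.inv_mul]
    _ = A' := by rw [hAB', h'.one_mul]

end IsLocalInverse

end

theorem periodic_subgroup_card_le_factorial {n : ℕ}
    (S : Set (Matrix (Fin n) (Fin n) Trop))
    (hclosed : ∀ A ∈ S, ∀ B ∈ S, tropMulMat A B ∈ S)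
    (E : Matrix (Fin n) (Fin n) Trop) (hE : E ∈ S)
    (hEneut : ∀ A ∈ S, tropMulMat E A = A ∧ tropMulMat A E = A)
    (hinv : ∀ A ∈ S, ∃ B ∈ S, tropMulMat A B = E ∧ tropMulMat B A = E)
    (hper : ∀ A ∈ S, ∃ k : ℕ, tropIter A k = E) :
    S.Finite ∧ S.ncard ≤ Nat.factorial n := by
  choose inv hinvS hmul_inv hinv_mul using hinv
  have hloc (A : S) : IsLocalInverse E A (inv A A.2) :=
    ⟨hmul_inv A A.2, hinv_mul A A.2, (hEneut A A.2).1, (hEneut A A.2).2,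
      (hEneut _ (hinvS A A.2)).1, (hEneut _ (hinvS A A.2)).2⟩
  have hEE : tropMulMat E E = E := (hEneut E hE).1
  let σ : S → Equiv.Perm (CritClass hEE) := fun A => (hloc A).classPerm
  have hσ : Function.Injective σ := fun A A' heq => by
    obtain ⟨k, hk⟩ := hper _ (hclosed A A.2 _ (hinvS A' A'.2))
    obtain ⟨k', hk'⟩ := hper _ (hclosed A' A'.2 _ (hinvS A A.2))
    exact Subtype.ext ((hloc A).eq_of_classPerm_eq (hloc A') hk hk' heq)
  have : Finite S := Finite.of_injective σ hσ
  refine ⟨S.toFinite, ?_⟩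
  calc S.ncard = Nat.card S := (Nat.card_coe_set_eq S).symm
    _ ≤ Nat.card (Equiv.Perm (CritClass hEE)) := Nat.card_le_card_of_injective σ hσ
    _ = (Nat.card (CritClass hEE)).factorial := Nat.card_perm
    _ ≤ n.factorial := Nat.factorial_le (card_critClass_le hEE)
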